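/- Let k ≥ 2 be an integer and G a connected graph with at least k vertices and at least k edges. Then κ_k(L(G)) ≥ λ_k(G), where L(G) is the line graph of G. -/

import Mathlib

open SimpleGraph

variable {V : Type*}

/-- `T` is an `S`-Steiner tree in `G`: a subgraph of `G` that is a tree containing `S`. -/
def IsSteinerTree (G : SimpleGraph V) (S : Set V) (T : G.Subgraph) : Prop :=
  T.coe.IsTree ∧ S ⊆ T.verts

/-- There exist `n` pairwise edge-disjoint `S`-Steiner trees in `G`. -/
def EdgeDisjointPacking (G : SimpleGraph V) (S : Set V) (n : ℕ) : Prop :=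
  ∃ F : Fin n → G.Subgraph, (∀ i, IsSteinerTree G S (F i)) ∧
    ∀ i j, i ≠ j → Disjoint (F i).edgeSet (F j).edgeSet

/-- There exist `n` pairwise internally disjoint `S`-Steiner trees in `G`. -/
def InternallyDisjointPacking (G : SimpleGraph V) (S : Set V) (n : ℕ) : Prop :=
  ∃ F : Fin n → G.Subgraph, (∀ i, IsSteinerTree G S (F i)) ∧
    ∀ i j, i ≠ j →
      Disjoint (F i).edgeSet (F j).edgeSet ∧ (F i).verts ∩ (F j).verts = S

/-- `λ_G(S)`: the maximum number of pairwise edge-disjoint `S`-Steiner trees. -/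
noncomputable def steinerLambda (G : SimpleGraph V) (S : Set V) : ℕ :=
  sSup {n | EdgeDisjointPacking G S n}

/-- `κ_G(S)`: the maximum number of pairwise internally disjoint `S`-Steiner trees. -/
noncomputable def steinerKappa (G : SimpleGraph V) (S : Set V) : ℕ :=
  sSup {n | InternallyDisjointPacking G S n}

/-- `λ_k(G)`: the `k`-tree edge-connectivity of `G`. -/
noncomputable def treeEdgeConn (G : SimpleGraph V) (k : ℕ) : ℕ :=
  sInf {m | ∃ S : Set V, S.ncard = k ∧ m = steinerLambda G S}

/-- `κ_k(G)`: the `k`-tree connectivity of `G`. -/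
noncomputable def treeConn (G : SimpleGraph V) (k : ℕ) : ℕ :=
  sInf {m | ∃ S : Set V, S.ncard = k ∧ m = steinerKappa G S}

/-!
Fix a `k`-set `S` of edges of `G`. Hall's theorem in deficiency form, applied to the incidences
between `S` and the vertices, gives a `k`-set `W` of vertices, a core `A ⊆ S` whose edges have
both ends in `W`, and an injective choice of a private end in `W` for each edge of `S \ A`,
touching no edge of `A`. Take `n` edge-disjoint `W`-Steiner trees `T i` and root them all at one
`ρ ∈ W`. In `L(G)`, every edge of `T i` hangs on the parent edge of its upper end, and every
`e ∈ S` outside `T i` hangs on the parent edge of its anchor: its private end, or, for a core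
edge, its non-root end of least depth in the tree that contains it. This is a tree on
`E(T i) ∪ S`, and these trees meet exactly in `S`. Two of them could only share an edge `{a, b}`
of `L(G)` with `a` hanging on `b` in one tree and `b` on `a` in the other; then `a` and `b` have
the same anchor `s`, both lie in the core, and both are parent edges of `s`, which the choice of
anchors forces to be `s(s, ρ)`.
-/

open Finset in
theorem Finset.exists_deficient_subset_and_injective {ι α : Type*} [DecidableEq ι]
    [DecidableEq α] (S : Finset ι) (N : ι → Finset α) :
    ∃ A ⊆ S, #(A.biUnion N) ≤ #A ∧ ∃ x : ↥(S \ A) → α,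
      Function.Injective x ∧ ∀ i : ↥(S \ A), x i ∈ N i ∧ x i ∉ A.biUnion N := by
  set defect : Finset ι → ℤ := fun A => #A - #(A.biUnion N)
  obtain ⟨A, hAS, hmax⟩ := S.powerset.exists_max_image defect ⟨∅, empty_mem_powerset _⟩
  rw [mem_powerset] at hAS
  refine ⟨A, hAS, ?_, ?_⟩
  · have := hmax ∅ (empty_mem_powerset _)
    simp only [defect, card_empty, biUnion_empty] at this
    omega
  -- Hall's condition on `S \ A` holds because no `B ⊆ S \ A` can raise the defect of `A`.
  suffices hall : ∀ s : Finset ↥(S \ A),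
      #s ≤ #(s.biUnion fun i => N i \ A.biUnion N) by
    obtain ⟨x, hx, hxN⟩ := (all_card_le_biUnion_card_iff_exists_injective _).mp hall
    exact ⟨x, hx, fun i => mem_sdiff.mp (hxN i)⟩
  intro s
  set B := s.map (Function.Embedding.subtype _)
  have hBs : #B = #s := card_map _
  have hAB : Disjoint A B := by
    simp only [B, disjoint_left, mem_map, Function.Embedding.coe_subtype]
    rintro i hi ⟨j, -, rfl⟩
    exact (mem_sdiff.mp j.2).2 hi
  have hBS : B ⊆ S := by
    simp only [B, subset_iff, mem_map, Function.Embedding.coe_subtype]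
    rintro _ ⟨j, -, rfl⟩
    exact (mem_sdiff.mp j.2).1
  have hsub : (A ∪ B).biUnion N ⊆ A.biUnion N ∪ s.biUnion fun i => N i \ A.biUnion N := by
    intro v hv
    by_cases hvA : v ∈ A.biUnion N
    · exact mem_union_left _ hvA
    obtain ⟨i, hi, hvi⟩ := mem_biUnion.mp hv
    obtain ⟨j, hj, rfl⟩ : ∃ j ∈ s, j.1 = i := by
      rcases mem_union.mp hi with hi | hi
      · exact absurd (mem_biUnion.mpr ⟨i, hi, hvi⟩) hvA
      · simpa [B] using hi
    exact mem_union_right _ (mem_biUnion.mpr ⟨j, hj, mem_sdiff.mpr ⟨hvi, hvA⟩⟩)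
  have hle := hmax (A ∪ B) (mem_powerset.mpr (union_subset hAS hBS))
  have hcard := (card_le_card hsub).trans (card_union_le _ _)
  simp only [defect, card_union_of_disjoint hAB, hBs] at hle
  omega

namespace SimpleGraph

variable {α : Type*}

theorem isAcyclic_of_forall_adj_le_eq {Γ : SimpleGraph α} (h : α → ℕ)
    (hh : ∀ a b c, Γ.Adj a b → Γ.Adj a c → h b ≤ h a → h c ≤ h a → b = c) :
    Γ.IsAcyclic := by
  classical
  intro v c hc
  obtain ⟨x, hx, hxmax⟩ := c.support.toFinset.exists_max_image h ⟨v, by simp⟩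
  rw [List.mem_toFinset] at hx
  have hlow : ∀ y, c.toSubgraph.Adj x y → Γ.Adj x y ∧ h y ≤ h x := fun y hy =>
    ⟨c.toSubgraph.adj_sub hy,
      hxmax y (List.mem_toFinset.mpr (Walk.mem_support_of_adj_toSubgraph hy.symm))⟩
  obtain ⟨y, z, hyz, hnbr⟩ := Set.ncard_eq_two.mp (hc.ncard_neighborSet_toSubgraph_eq_two hx)
  have hy : c.toSubgraph.Adj x y := by simp [← Subgraph.mem_neighborSet, hnbr]
  have hz : c.toSubgraph.Adj x z := by simp [← Subgraph.mem_neighborSet, hnbr]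
  exact hyz (hh x y z (hlow y hy).1 (hlow z hz).1 (hlow y hy).2 (hlow z hz).2)

theorem Reachable.exists_adj_dist_lt {H : SimpleGraph α} {v ρ : α} (h : H.Reachable v ρ)
    (hne : v ≠ ρ) : ∃ u, H.Adj v u ∧ H.dist u ρ < H.dist v ρ := by
  obtain ⟨p, hp⟩ := h.exists_walk_length_eq_dist
  have hnil : ¬p.Nil := fun hnil => hne hnil.eq
  refine ⟨p.snd, p.adj_snd hnil, ?_⟩
  have := Walk.length_tail_add_one hnil
  have := dist_le p.tail
  omega

theorem nonempty_endpoints_ne {G : SimpleGraph α} (e : G.edgeSet) (v : α) :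
    {w | w ∈ (e : Sym2 α) ∧ w ≠ v}.Nonempty := by
  obtain ⟨z, hz⟩ := e
  induction z with
  | h a b =>
    have hab : a ≠ b := G.ne_of_adj hz
    by_cases ha : a = v
    · exact ⟨b, Sym2.mem_mk_right a b, ha ▸ hab.symm⟩
    · exact ⟨a, Sym2.mem_mk_left a b, ha⟩

variable (H : SimpleGraph α)

def parentSubgraph (s : Set α) (r : α) (p : α → α) : H.Subgraph where
  verts := s
  Adj a b := a ∈ s ∧ b ∈ s ∧ H.Adj a b ∧ (a ≠ r ∧ p a = b ∨ b ≠ r ∧ p b = a)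
  adj_sub h := h.2.2.1
  edge_vert h := h.1
  symm := ⟨fun _ _ h => ⟨h.2.1, h.1, h.2.2.1.symm, h.2.2.2.symm⟩⟩

variable {H} {s t : Set α} {r r' : α} {p q : α → α}

theorem parentSubgraph_isTree (hr : r ∈ s)
    (hp : ∀ a ∈ s, a ≠ r → p a ∈ s ∧ H.Adj a (p a))
    (h : α → ℕ) (hh : ∀ a ∈ s, a ≠ r → h (p a) < h a) :
    (H.parentSubgraph s r p).coe.IsTree := by
  have hreach : ∀ n, ∀ a (ha : a ∈ s), h a = n →
      (H.parentSubgraph s r p).coe.Reachable ⟨a, ha⟩ ⟨r, hr⟩ := by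
    intro n
    induction n using Nat.strong_induction_on with
    | _ n ih =>
      intro a ha han
      by_cases har : a = r
      · subst har; rfl
      have hpa := hp a ha har
      have hadj : (H.parentSubgraph s r p).coe.Adj ⟨a, ha⟩ ⟨p a, hpa.1⟩ :=
        ⟨ha, hpa.1, hpa.2, Or.inl ⟨har, rfl⟩⟩
      exact hadj.reachable.trans (ih _ (han ▸ hh a ha har) _ hpa.1 rfl)
  have : Nonempty (H.parentSubgraph s r p).verts := ⟨⟨r, hr⟩⟩
  refine ⟨⟨fun a b => (hreach _ a a.2 rfl).trans (hreach _ b b.2 rfl).symm⟩,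
    isAcyclic_of_forall_adj_le_eq (fun a => h a) ?_⟩
  have hup : ∀ a b : (H.parentSubgraph s r p).verts,
      (H.parentSubgraph s r p).coe.Adj a b → h b ≤ h a → p a = b := by
    rintro a b ⟨-, -, -, ⟨-, hab⟩ | ⟨hb, hba⟩⟩ hle
    · exact hab
    · exact absurd (hba ▸ hh b b.2 hb) hle.not_gt
  intro a b c hb hc hbh hch
  exact Subtype.ext ((hup a b hb hbh).symm.trans (hup a c hc hch))

theorem parentSubgraph_edgeSet_disjoint
    (hpq : ∀ a ∈ s, a ∈ t → a ≠ r → a ≠ r' → p a ≠ q a)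
    (hcross : ∀ a ∈ s, ∀ b ∈ t, a ≠ r → b ≠ r' → p a = b → q b ≠ a) :
    Disjoint (H.parentSubgraph s r p).edgeSet (H.parentSubgraph t r' q).edgeSet := by
  rw [Set.disjoint_left]
  rintro ⟨a, b⟩ ⟨has, hbs, -, hab⟩ ⟨hat, hbt, -, hab'⟩
  dsimp only at has hbs hat hbt hab hab'
  rcases hab with ⟨ha, hp⟩ | ⟨hb, hp⟩ <;> rcases hab' with ⟨ha', hq⟩ | ⟨hb', hq⟩
  · exact hpq a has hat ha ha' (hp.trans hq.symm)
  · exact hcross a has b hbt ha hb' hp hq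
  · exact hcross b hbs a hat hb ha' hp hq
  · exact hpq b hbs hbt hb hb' (hp.trans hq.symm)

end SimpleGraph

namespace SimpleGraph.Subgraph

variable {G : SimpleGraph V} (T : G.Subgraph) (ρ : V)

def lineVerts : Set G.edgeSet := {e | (e : Sym2 V) ∈ T.edgeSet}

noncomputable def depth (v : V) : ℕ := T.spanningCoe.dist v ρ

open Classical in
noncomputable def parent (v : V) : V :=
  if h : ∃ u, T.Adj v u ∧ T.depth ρ u < T.depth ρ v then h.choose else v

noncomputable def upperEnd (e : Sym2 V) : V :=
  Function.argminOn (T.depth ρ) {v | v ∈ e} ⟨_, e.out_fst_mem⟩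

open Classical in
noncomputable def parentEdge (r : G.edgeSet) (v : V) : G.edgeSet :=
  if h : T.Adj v (T.parent ρ v) then ⟨s(v, T.parent ρ v), T.adj_sub h⟩ else r

open Classical in
noncomputable def attachVertex (att : G.edgeSet → V) (e : G.edgeSet) : V :=
  if e ∈ T.lineVerts then T.upperEnd ρ e else att e

noncomputable def lineParent (r : G.edgeSet) (att : G.edgeSet → V) (e : G.edgeSet) :
    G.edgeSet :=
  T.parentEdge ρ r (T.attachVertex ρ att e)

open Classical in
noncomputable def edgeHeight (r : G.edgeSet) (e : G.edgeSet) : ℕ :=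
  if e = r then 0 else T.depth ρ (T.upperEnd ρ e) + 1

noncomputable def lineTree (S : Set G.edgeSet) (r : G.edgeSet) (att : G.edgeSet → V) :
    G.lineGraph.Subgraph :=
  G.lineGraph.parentSubgraph (T.lineVerts ∪ S) r (T.lineParent ρ r att)

variable {T ρ} {r : G.edgeSet} {v : V}

theorem upperEnd_mem (e : Sym2 V) : T.upperEnd ρ e ∈ e :=
  Function.argminOn_mem _ _ _

theorem depth_upperEnd_le {e : Sym2 V} (hv : v ∈ e) :
    T.depth ρ (T.upperEnd ρ e) ≤ T.depth ρ v :=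
  Function.argminOn_le _ _ hv

theorem adj_parent (hT : T.Connected) (hρ : ρ ∈ T.verts) (hv : v ∈ T.verts) (hne : v ≠ ρ) :
    T.Adj v (T.parent ρ v) ∧ T.depth ρ (T.parent ρ v) < T.depth ρ v := by
  have hreach : T.spanningCoe.Reachable v ρ :=
    (hT.coe ⟨v, hv⟩ ⟨ρ, hρ⟩).map ⟨Subtype.val, id⟩
  have h : ∃ u, T.Adj v u ∧ T.depth ρ u < T.depth ρ v := hreach.exists_adj_dist_lt hne
  rw [parent, dif_pos h]
  exact h.choose_spec

theorem parent_self : T.parent ρ ρ = ρ :=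
  dif_neg fun ⟨_, _, h⟩ => by simp [depth] at h

theorem parentEdge_self (r : G.edgeSet) : T.parentEdge ρ r ρ = r := by
  rw [parentEdge, dif_neg (by rw [parent_self]; exact fun h => h.ne rfl)]

theorem coe_parentEdge (hT : T.Connected) (hρ : ρ ∈ T.verts) (hv : v ∈ T.verts)
    (hne : v ≠ ρ) :
    (T.parentEdge ρ r v : Sym2 V) = s(v, T.parent ρ v) := by
  rw [parentEdge, dif_pos (adj_parent hT hρ hv hne).1]

theorem parentEdge_mem_lineVerts (hr : r ∈ T.lineVerts) (v : V) :
    T.parentEdge ρ r v ∈ T.lineVerts := by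
  unfold parentEdge
  split_ifs with h
  exacts [h, hr]

theorem mem_parentEdge (hT : T.Connected) (hρ : ρ ∈ T.verts) (hρr : ρ ∈ (r : Sym2 V))
    (hv : v ∈ T.verts) : v ∈ (T.parentEdge ρ r v : Sym2 V) := by
  rcases eq_or_ne v ρ with rfl | hne
  · rwa [parentEdge_self]
  · rw [coe_parentEdge hT hρ hv hne]
    exact Sym2.mem_mk_left _ _

theorem edgeHeight_parentEdge_le (hT : T.Connected) (hρ : ρ ∈ T.verts) (hv : v ∈ T.verts) :
    T.edgeHeight ρ r (T.parentEdge ρ r v) ≤ T.depth ρ v := by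
  rcases eq_or_ne v ρ with rfl | hne
  · simp [edgeHeight, parentEdge_self]
  have hle := depth_upperEnd_le (T := T) (ρ := ρ)
    (coe_parentEdge (r := r) hT hρ hv hne ▸ Sym2.mem_mk_right v (T.parent ρ v))
  have := (adj_parent hT hρ hv hne).2
  unfold edgeHeight
  split_ifs <;> omega

theorem lineParent_mem_lineVerts (hr : r ∈ T.lineVerts) (att : G.edgeSet → V) (e : G.edgeSet) :
    T.lineParent ρ r att e ∈ T.lineVerts :=
  parentEdge_mem_lineVerts hr _

theorem attachVertex_of_not_mem {att : G.edgeSet → V} {e : G.edgeSet} (he : e ∉ T.lineVerts) :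
    T.attachVertex ρ att e = att e :=
  if_neg he

theorem attachVertex_mem {S : Set G.edgeSet} {att : G.edgeSet → V}
    (hatt : ∀ e ∈ S, e ∉ T.lineVerts → att e ∈ (e : Sym2 V) ∧ att e ∈ T.verts)
    {e : G.edgeSet} (he : e ∈ T.lineVerts ∪ S) :
    T.attachVertex ρ att e ∈ (e : Sym2 V) ∧ T.attachVertex ρ att e ∈ T.verts := by
  unfold attachVertex
  split_ifs with heT
  · exact ⟨upperEnd_mem _, mem_verts_of_mem_edge heT (upperEnd_mem _)⟩
  · exact hatt e (he.resolve_left heT) heT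

theorem isTree_lineTree {S : Set G.edgeSet} {att : G.edgeSet → V} (hT : T.Connected)
    (hρ : ρ ∈ T.verts) (hr : r ∈ T.lineVerts) (hρr : ρ ∈ (r : Sym2 V))
    (hatt : ∀ e ∈ S, e ∉ T.lineVerts → att e ∈ (e : Sym2 V) ∧ att e ∈ T.verts) :
    (T.lineTree ρ S r att).coe.IsTree := by
  classical
  have hmem := lineParent_mem_lineVerts (ρ := ρ) hr att
  set h : G.edgeSet → ℕ := fun e => if e ∈ T.lineVerts then T.edgeHeight ρ r e
    else T.edgeHeight ρ r (T.lineParent ρ r att e) + 1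
  have hlt : ∀ e ∈ T.lineVerts ∪ S, e ≠ r → h (T.lineParent ρ r att e) < h e := by
    intro e he her
    simp only [h, if_pos (hmem e)]
    split_ifs with heT
    · have hle : T.edgeHeight ρ r (T.lineParent ρ r att e) ≤
          T.depth ρ (T.attachVertex ρ att e) :=
        edgeHeight_parentEdge_le hT hρ (attachVertex_mem hatt he).2
      have hup : T.attachVertex ρ att e = T.upperEnd ρ e := if_pos heT
      have hheight : T.edgeHeight ρ r e = T.depth ρ (T.upperEnd ρ e) + 1 := if_neg her
      rw [hup] at hle
      omega
    · omega
  refine parentSubgraph_isTree (Or.inl hr) (fun e he her => ⟨Or.inl (hmem e), ?_⟩) h hlt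
  refine lineGraph_adj_iff_exists.mpr ⟨fun heq => ?_, _, (attachVertex_mem hatt he).1,
    mem_parentEdge hT hρ hρr (attachVertex_mem hatt he).2⟩
  have := hlt e he her
  rw [← heq] at this
  exact this.false

end SimpleGraph.Subgraph

theorem IsSteinerTree.exists_mem_edge {G : SimpleGraph V} {S : Set V} {T : G.Subgraph}
    (hT : IsSteinerTree G S T) (hS : S.Nontrivial) {v : V} (hv : v ∈ T.verts) :
    ∃ e : G.edgeSet, e ∈ T.lineVerts ∧ v ∈ (e : Sym2 V) := by
  have : Nontrivial T.verts := (hS.mono hT.2).coe_sort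
  obtain ⟨u, hu⟩ :=
    Subgraph.Preconnected.exists_adj_of_nontrivial ⟨hT.1.connected.preconnected⟩ ⟨v, hv⟩
  exact ⟨⟨s(v, u), T.adj_sub hu⟩, hu, Sym2.mem_mk_left _ _⟩

structure EdgeAnchoring (G : SimpleGraph V) (S : Set G.edgeSet) (W : Set V) where
  core : Set G.edgeSet
  pick : G.edgeSet → V
  mem_terminals_of_mem_core : ∀ e ∈ core, ∀ v ∈ (e : Sym2 V), v ∈ W
  pick_mem : ∀ e ∈ S \ core, pick e ∈ (e : Sym2 V)
  pick_mem_terminals : ∀ e ∈ S \ core, pick e ∈ W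
  pick_not_mem_core : ∀ e ∈ S \ core, ∀ g ∈ core, pick e ∉ (g : Sym2 V)
  injOn_pick : Set.InjOn pick (S \ core)

open Finset in
theorem exists_edgeAnchoring [Finite V] {G : SimpleGraph V} (S : Set G.edgeSet)
    (hS : S.ncard ≤ Nat.card V) :
    ∃ W : Set V, W.ncard = S.ncard ∧ Nonempty (EdgeAnchoring G S W) := by
  classical
  set S' := (Set.toFinite S).toFinset
  obtain ⟨A, hAS, hdef, x, hx, hxN⟩ :=
    S'.exists_deficient_subset_and_injective fun e => (e : Sym2 V).toFinset
  set N := A.biUnion fun e => (e : Sym2 V).toFinset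
  set W₀ : Finset V := N ∪ Finset.univ.image x
  have hW₀ : W₀.card ≤ S.ncard := by
    have h₁ : #W₀ ≤ #N + #(Finset.univ.image x) := Finset.card_union_le _ _
    have h₂ : (Finset.univ.image x).card ≤ (S' \ A).card :=
      Finset.card_image_le.trans (by rw [Finset.card_univ, Fintype.card_coe])
    have h₃ := Finset.card_sdiff_add_card_eq_card hAS
    have h₄ : S.ncard = #S' := Set.ncard_eq_toFinset_card S _
    omega
  obtain ⟨W, hW₀W, -, hW⟩ := Set.exists_subsuperset_card_eq (n := S.ncard)
    (Set.subset_univ (W₀ : Set V)) (by rwa [Set.ncard_coe_finset]) (by rwa [Set.ncard_univ])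
  set pick := Function.extend Subtype.val x fun e : G.edgeSet => (e : Sym2 V).out.1
  have hpick : ∀ i, pick i.1 = x i := Subtype.val_injective.extend_apply x _
  have hsub : ∀ e ∈ S \ ↑A, ∃ i : ↥(S' \ A), i.1 = e := fun e he =>
    ⟨⟨e, Finset.mem_sdiff.mpr ⟨(Set.toFinite S).mem_toFinset.mpr he.1, he.2⟩⟩, rfl⟩
  refine ⟨W, hW, ⟨⟨A, pick, ?_, ?_, ?_, ?_, ?_⟩⟩⟩
  · intro e he v hv
    exact hW₀W (mem_union_left _ (mem_biUnion.mpr ⟨e, he, Sym2.mem_toFinset.mpr hv⟩))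
  · intro e he
    obtain ⟨i, rfl⟩ := hsub e he
    rw [hpick]
    exact Sym2.mem_toFinset.mp (hxN i).1
  · intro e he
    obtain ⟨i, rfl⟩ := hsub e he
    rw [hpick]
    exact hW₀W (Finset.mem_union_right _ (Finset.mem_image_of_mem _ (Finset.mem_univ i)))
  · intro e he g hg hxg
    obtain ⟨i, rfl⟩ := hsub e he
    rw [hpick] at hxg
    exact (hxN i).2 (Finset.mem_biUnion.mpr ⟨g, hg, Sym2.mem_toFinset.mpr hxg⟩)
  · intro e he f hf hef
    obtain ⟨i, rfl⟩ := hsub e he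
    obtain ⟨j, rfl⟩ := hsub f hf
    rw [hpick, hpick] at hef
    exact congrArg Subtype.val (hx hef)

structure RootedPacking (G : SimpleGraph V) (W : Set V) (ι : Type*) where
  tree : ι → G.Subgraph
  root : V
  rootEdge : ι → G.edgeSet
  connected : ∀ i, (tree i).Connected
  subset_verts : ∀ i, W ⊆ (tree i).verts
  root_mem : root ∈ W
  rootEdge_mem : ∀ i, rootEdge i ∈ (tree i).lineVerts
  root_mem_rootEdge : ∀ i, root ∈ (rootEdge i : Sym2 V)
  pairwise_disjoint : Pairwise fun i j => Disjoint (tree i).lineVerts (tree j).lineVerts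

theorem EdgeDisjointPacking.nonempty_rootedPacking {G : SimpleGraph V} {W : Set V} {n : ℕ}
    (h : EdgeDisjointPacking G W n) (hW : W.Nontrivial) :
    Nonempty (RootedPacking G W (Fin n)) := by
  obtain ⟨F, hF, hdisj⟩ := h
  obtain ⟨ρ, hρ⟩ := hW.nonempty
  choose r hr hρr using fun i => (hF i).exists_mem_edge hW ((hF i).2 hρ)
  exact ⟨{ tree := F, root := ρ, rootEdge := r
           connected := fun i => ⟨(hF i).1.connected⟩
           subset_verts := fun i => (hF i).2
           root_mem := hρ
           rootEdge_mem := hr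
           root_mem_rootEdge := hρr
           pairwise_disjoint := fun i j hij => (hdisj i j hij).preimage _ }⟩

namespace RootedPacking

variable {G : SimpleGraph V} {W : Set V} {ι : Type*} (P : RootedPacking G W ι)

open Classical in
noncomputable def depthOf (e : G.edgeSet) : V → ℕ :=
  if h : ∃ j, e ∈ (P.tree j).lineVerts then (P.tree h.choose).depth P.root else fun _ => 0

theorem depthOf_eq {e : G.edgeSet} {j : ι} (he : e ∈ (P.tree j).lineVerts) :
    P.depthOf e = (P.tree j).depth P.root := by
  have h : ∃ j, e ∈ (P.tree j).lineVerts := ⟨j, he⟩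
  have hj : h.choose = j := by
    by_contra hne
    exact Set.disjoint_left.mp (P.pairwise_disjoint hne) h.choose_spec he
  rw [depthOf, dif_pos h, hj]

end RootedPacking

namespace EdgeAnchoring

variable {G : SimpleGraph V} {S : Set G.edgeSet} {W : Set V} {ι : Type*}
  (A : EdgeAnchoring G S W) (P : RootedPacking G W ι)

open Classical in
noncomputable def anchor (e : G.edgeSet) : V :=
  if e ∈ A.core then
    Function.argminOn (P.depthOf e) {v | v ∈ (e : Sym2 V) ∧ v ≠ P.root}
      (nonempty_endpoints_ne e _)
  else A.pick e

variable {A P} {e : G.edgeSet}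

theorem anchor_of_mem_core (he : e ∈ A.core) :
    A.anchor P e ∈ (e : Sym2 V) ∧ A.anchor P e ≠ P.root := by
  rw [anchor, if_pos he]
  exact Function.argminOn_mem (P.depthOf e) {v | v ∈ (e : Sym2 V) ∧ v ≠ P.root} _

theorem depthOf_anchor_le (he : e ∈ A.core) {v : V} (hv : v ∈ (e : Sym2 V))
    (hvρ : v ≠ P.root) : P.depthOf e (A.anchor P e) ≤ P.depthOf e v := by
  rw [anchor, if_pos he]
  exact Function.argminOn_le (P.depthOf e) {v | v ∈ (e : Sym2 V) ∧ v ≠ P.root} ⟨hv, hvρ⟩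

theorem anchor_mem (he : e ∈ S) : A.anchor P e ∈ (e : Sym2 V) ∧ A.anchor P e ∈ W := by
  by_cases hc : e ∈ A.core
  · have h := (anchor_of_mem_core (P := P) hc).1
    exact ⟨h, A.mem_terminals_of_mem_core e hc _ h⟩
  · rw [anchor, if_neg hc]
    exact ⟨A.pick_mem e ⟨he, hc⟩, A.pick_mem_terminals e ⟨he, hc⟩⟩

theorem mem_core_of_anchor_eq {a b : G.edgeSet} (ha : a ∈ S) (hb : b ∈ S) (hab : a ≠ b)
    (heq : A.anchor P a = A.anchor P b) (hmem : A.anchor P a ∈ (b : Sym2 V)) : a ∈ A.core := by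
  by_contra hac
  have hpa : A.anchor P a = A.pick a := if_neg hac
  by_cases hbc : b ∈ A.core
  · exact A.pick_not_mem_core a ⟨ha, hac⟩ b hbc (hpa ▸ hmem)
  · have hpb : A.anchor P b = A.pick b := if_neg hbc
    exact hab (A.injOn_pick ⟨ha, hac⟩ ⟨hb, hbc⟩ (hpa ▸ hpb ▸ heq))

theorem parent_anchor_eq_root {i : ι} {b : G.edgeSet} (hb : b ∈ A.core)
    (hbi : b ∈ (P.tree i).lineVerts)
    (hbs : (b : Sym2 V) = s(A.anchor P b, (P.tree i).parent P.root (A.anchor P b))) :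
    (P.tree i).parent P.root (A.anchor P b) = P.root := by
  by_contra hne
  have hs := anchor_of_mem_core (P := P) hb
  have hlt := (Subgraph.adj_parent (P.connected i) (P.subset_verts i P.root_mem)
    (Subgraph.mem_verts_of_mem_edge hbi hs.1) hs.2).2
  have hle := depthOf_anchor_le hb (hbs ▸ Sym2.mem_mk_right _ _) hne
  rw [P.depthOf_eq hbi] at hle
  omega

theorem anchor_mem_lineParent {i : ι} {a : G.edgeSet} (ha : a ∈ S)
    (hai : a ∉ (P.tree i).lineVerts) :
    A.anchor P a ∈ ((P.tree i).lineParent P.root (P.rootEdge i) (A.anchor P) a : Sym2 V) := by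
  rw [Subgraph.lineParent, Subgraph.attachVertex_of_not_mem hai]
  exact Subgraph.mem_parentEdge (P.connected i) (P.subset_verts i P.root_mem)
    (P.root_mem_rootEdge i) (P.subset_verts i (anchor_mem ha).2)

theorem coe_lineParent_of_mem_core {i : ι} {a : G.edgeSet} (ha : a ∈ S) (hac : a ∈ A.core)
    (hai : a ∉ (P.tree i).lineVerts) :
    ((P.tree i).lineParent P.root (P.rootEdge i) (A.anchor P) a : Sym2 V) =
      s(A.anchor P a, (P.tree i).parent P.root (A.anchor P a)) := by
  rw [Subgraph.lineParent, Subgraph.attachVertex_of_not_mem hai]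
  exact Subgraph.coe_parentEdge (P.connected i) (P.subset_verts i P.root_mem)
    (P.subset_verts i (anchor_mem ha).2) (anchor_of_mem_core hac).2

theorem lineParent_cross_false {i j : ι} (hij : i ≠ j) {a b : G.edgeSet}
    (ha : a ∈ (P.tree i).lineVerts ∪ S) (hb : b ∈ (P.tree j).lineVerts ∪ S)
    (hab : (P.tree i).lineParent P.root (P.rootEdge i) (A.anchor P) a = b)
    (hba : (P.tree j).lineParent P.root (P.rootEdge j) (A.anchor P) b = a) : False := by
  have hdisj := Set.disjoint_left.mp (P.pairwise_disjoint hij)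
  have hbi : b ∈ (P.tree i).lineVerts :=
    hab ▸ Subgraph.lineParent_mem_lineVerts (P.rootEdge_mem i) _ _
  have haj : a ∈ (P.tree j).lineVerts :=
    hba ▸ Subgraph.lineParent_mem_lineVerts (P.rootEdge_mem j) _ _
  have hai : a ∉ (P.tree i).lineVerts := fun h => hdisj h haj
  have hbj : b ∉ (P.tree j).lineVerts := hdisj hbi
  replace ha := ha.resolve_left hai
  replace hb := hb.resolve_left hbj
  have hne : a ≠ b := fun h => hai (h ▸ hbi)
  have hab_mem : A.anchor P a ∈ (b : Sym2 V) := hab ▸ anchor_mem_lineParent ha hai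
  have hba_mem : A.anchor P b ∈ (a : Sym2 V) := hba ▸ anchor_mem_lineParent hb hbj
  have heq : A.anchor P a = A.anchor P b := by
    by_contra h
    exact hne (Subtype.ext
      (Sym2.eq_of_ne_mem h (anchor_mem ha).1 hba_mem hab_mem (anchor_mem hb).1))
  have hac := mem_core_of_anchor_eq ha hb hne heq hab_mem
  have hbc := mem_core_of_anchor_eq hb ha hne.symm heq.symm hba_mem
  -- Both `a` and `b` are parent edges of their common anchor, so both equal `s(anchor, root)`.
  have ha_eq := coe_lineParent_of_mem_core hb hbc hbj
  have hb_eq := coe_lineParent_of_mem_core ha hac hai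
  rw [hba, ← heq] at ha_eq
  rw [hab, heq] at hb_eq
  rw [parent_anchor_eq_root hac haj ha_eq] at ha_eq
  rw [parent_anchor_eq_root hbc hbi hb_eq, ← heq] at hb_eq
  exact hne (Subtype.ext (ha_eq.trans hb_eq.symm))

end EdgeAnchoring

theorem EdgeAnchoring.internallyDisjointPacking {G : SimpleGraph V} {S : Set G.edgeSet}
    {W : Set V} {n : ℕ} (A : EdgeAnchoring G S W) (P : RootedPacking G W (Fin n)) :
    InternallyDisjointPacking G.lineGraph S n := by
  refine ⟨fun i => (P.tree i).lineTree P.root S (P.rootEdge i) (A.anchor P),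
    fun i => ⟨?_, Set.subset_union_right⟩, fun i j hij => ⟨?_, ?_⟩⟩
  · exact Subgraph.isTree_lineTree (P.connected i) (P.subset_verts i P.root_mem)
      (P.rootEdge_mem i) (P.root_mem_rootEdge i) fun e he _ =>
        ⟨(anchor_mem he).1, P.subset_verts i (anchor_mem he).2⟩
  · refine parentSubgraph_edgeSet_disjoint (fun a _ _ _ _ h => ?_)
      fun a ha b hb _ _ hab hba => lineParent_cross_false hij ha hb hab hba
    refine Set.disjoint_left.mp (P.pairwise_disjoint hij)
      (Subgraph.lineParent_mem_lineVerts (ρ := P.root) (P.rootEdge_mem i) (A.anchor P) a) ?_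
    rw [h]
    exact Subgraph.lineParent_mem_lineVerts (P.rootEdge_mem j) _ a
  · ext e
    have : e ∈ (P.tree i).lineVerts → e ∉ (P.tree j).lineVerts :=
      fun h => Set.disjoint_left.mp (P.pairwise_disjoint hij) h
    simp only [Subgraph.lineTree, parentSubgraph, Set.mem_inter_iff, Set.mem_union]
    tauto

theorem bddAbove_internallyDisjointPacking {β : Type*} [Finite β] {H : SimpleGraph β}
    {S : Set β} (hS : S.Nontrivial) : BddAbove {n | InternallyDisjointPacking H S n} := by
  refine ⟨Nat.card H.edgeSet, fun n ⟨F, hF, hdisj⟩ => ?_⟩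
  obtain ⟨v, hv⟩ := hS.nonempty
  choose e he using fun i => ((hF i).exists_mem_edge hS ((hF i).2 hv)).imp fun _ h => h.1
  have he_inj : Function.Injective e := fun i j hij => by
    by_contra hne
    exact Set.disjoint_left.mp (hdisj i j hne).1 (he i) (hij ▸ he j)
  simpa using Nat.card_le_card_of_injective e he_inj

theorem steinerLambda_le_steinerKappa {β : Type*} [Finite β] {G : SimpleGraph V}
    {H : SimpleGraph β} {W : Set V} {S : Set β} (hS : S.Nontrivial)
    (h : ∀ n, EdgeDisjointPacking G W n → InternallyDisjointPacking H S n) :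
    steinerLambda G W ≤ steinerKappa H S :=
  csSup_le_csSup (bddAbove_internallyDisjointPacking hS)
    ⟨0, Fin.elim0, Fin.rec0, Fin.rec0⟩ h

theorem exists_steinerKappa_eq_treeConn {β : Type*} (H : SimpleGraph β) {k : ℕ}
    (hk : k ≤ Nat.card β) : ∃ S : Set β, S.ncard = k ∧ steinerKappa H S = treeConn H k := by
  obtain ⟨S, -, hS⟩ :=
    Set.exists_subset_card_eq (s := Set.univ) (n := k) (by rwa [Set.ncard_univ])
  obtain ⟨S', hS', heq⟩ :
      sInf {m | ∃ S : Set β, S.ncard = k ∧ m = steinerKappa H S} ∈ _ :=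
    Nat.sInf_mem ⟨_, S, hS, rfl⟩
  exact ⟨S', hS', heq.symm⟩

theorem treeConn_lineGraph_ge_treeEdgeConn_general [Fintype V] (G : SimpleGraph V)
    (k : ℕ) (hk : 2 ≤ k)
    (hv : k ≤ Fintype.card V) (he : k ≤ G.edgeSet.ncard) :
    treeEdgeConn G k ≤ treeConn G.lineGraph k := by
  obtain ⟨S, hSk, hS⟩ := exists_steinerKappa_eq_treeConn G.lineGraph (k := k)
    (by rwa [Nat.card_coe_set_eq])
  obtain ⟨W, hWk, ⟨A⟩⟩ := exists_edgeAnchoring S (by rwa [hSk, Nat.card_eq_fintype_card])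
  have hW : W.Nontrivial := (Set.one_lt_ncard_iff_nontrivial_and_finite.mp (by omega)).1
  have hS2 : S.Nontrivial := (Set.one_lt_ncard_iff_nontrivial_and_finite.mp (by omega)).1
  calc treeEdgeConn G k ≤ steinerLambda G W := Nat.sInf_le ⟨W, hWk.trans hSk, rfl⟩
    _ ≤ steinerKappa G.lineGraph S := steinerLambda_le_steinerKappa hS2 fun n h =>
        A.internallyDisjointPacking (h.nonempty_rootedPacking hW).some
    _ = treeConn G.lineGraph k := hS

/-- If `G` is connected with at least `k` vertices and at least `k` edges (`k ≥ 2`),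
then `κ_k(L(G)) ≥ λ_k(G)`. -/
theorem treeConn_lineGraph_ge_treeEdgeConn [Fintype V] (G : SimpleGraph V)
    (k : ℕ) (hk : 2 ≤ k) (hG : G.Connected)
    (hv : k ≤ Fintype.card V) (he : k ≤ G.edgeSet.ncard) :
    treeEdgeConn G k ≤ treeConn G.lineGraph k :=
  treeConn_lineGraph_ge_treeEdgeConn_general G k hk hv he
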